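/- arXiv:2103.04688 — 8 statements merged into one kernel-verified Lean document; each statement's English description precedes it below -/
import Mathlib

section
/- Let γ, a, ρ, β, σ be real numbers with γ ≠ 1, γ + a ≠ 0 and σ ≠ 0, and suppose D := ((1−γ−a)² ρ²)/((γ+a)(1−γ)) + 1 − a/(1−γ) ≠ 0. Set k := 1/D and c := ((1−γ−a) β ρ k)/((γ+a)(1−γ)σ). Then −(1/2)(γ+a)(1−γ)σ² c² + (1/2)β² k (k − 1 − a k/(1−γ)) + (1−γ−a) σ β ρ k c = 0. -/
/-!
The coefficient is a quadratic `-(1/2) p σ² c² + q σ c` in `c` plus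
`(1/2) β² k (k - 1 - a k/(1-γ))`, and `c = q/(pσ)` is its vertex (the optimal portfolio), so the
quadratic part equals `q²/(2p) = (1/2) β² k² A` with `A = (1-γ-a)² ρ² / ((γ+a)(1-γ))`.
Since `D = A + 1 - a/(1-γ)`, the whole coefficient collapses to `(1/2) β² k (k D - 1)`,
which vanishes for `k = 1/D`.
-/

/-- By the convention `x / 0 = 0` this also holds for `p = 0`. -/
theorem quadratic_value_at_vertex (p q : ℝ) {σ : ℝ} (hσ : σ ≠ 0) :
    -(1 / 2) * p * σ ^ 2 * (q / (p * σ)) ^ 2 + q * σ * (q / (p * σ)) = 1 / 2 * (q ^ 2 / p) := by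
  rcases eq_or_ne p 0 with rfl | hp
  · simp
  · field_simp
    ring

theorem quadratic_coefficient_vanishes_general
    (γ a ρ β σ : ℝ) (hσ : σ ≠ 0)
    (D : ℝ)
    (hD : D = ((1 - γ - a) ^ 2 * ρ ^ 2) / ((γ + a) * (1 - γ)) + 1 - a / (1 - γ))
    (k c : ℝ) (hk : k = 1 / D)
    (hc : c = ((1 - γ - a) * β * ρ * k) / ((γ + a) * (1 - γ) * σ)) :
    -(1 / 2) * (γ + a) * (1 - γ) * σ ^ 2 * c ^ 2
      + (1 / 2) * β ^ 2 * k * (k - 1 - a * k / (1 - γ))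
      + (1 - γ - a) * σ * β * ρ * k * c = 0 := by
  have hvertex := quadratic_value_at_vertex ((γ + a) * (1 - γ)) ((1 - γ - a) * β * ρ * k) hσ
  have hkD : k * (k * D - 1) = 0 := by
    have h := mul_self_mul_inv D⁻¹
    rw [inv_inv] at h
    rw [hk, one_div]
    linear_combination h
  subst hc hD
  linear_combination hvertex + (1 / 2) * β ^ 2 * hkD

/-- Under the choice `k = 1/D` of the exponent in the value-function ansatz, the
coefficient of the quadratic term `(g_y/g)²` in the reduced robust HJB equation
vanishes. -/
theorem quadratic_coefficient_vanishes
    (γ a ρ β σ : ℝ) (hγ : γ ≠ 1) (hγa : γ + a ≠ 0) (hσ : σ ≠ 0)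
    (D : ℝ)
    (hD : D = ((1 - γ - a) ^ 2 * ρ ^ 2) / ((γ + a) * (1 - γ)) + 1 - a / (1 - γ))
    (hD0 : D ≠ 0)
    (k c : ℝ) (hk : k = 1 / D)
    (hc : c = ((1 - γ - a) * β * ρ * k) / ((γ + a) * (1 - γ) * σ)) :
    -(1 / 2) * (γ + a) * (1 - γ) * σ ^ 2 * c ^ 2
      + (1 / 2) * β ^ 2 * k * (k - 1 - a * k / (1 - γ))
      + (1 - γ - a) * σ * β * ρ * k * c = 0 :=
  quadratic_coefficient_vanishes_general γ a ρ β σ hσ D hD k c hk hc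
end

section
/- Let γ, a, ρ be real numbers with γ ≠ 1 and γ + a ≠ 0, and suppose D := ((1−γ−a)² ρ²)/((γ+a)(1−γ)) + 1 − a/(1−γ) ≠ 0. Let ψ be a real number with ψ ∉ {0, 1}, set φ := 1/ψ, θ := (1−γ)/(1−φ), k := 1/D and ζ := −k/θ. Then ζψ + 1 = 0 if and only if ψ = 2 − γ − a + ((1−γ−a)²/(γ+a)) ρ². -/
/-! With `θ = (1-γ)ψ/(ψ-1)` and `k = 1/D` one gets `ζψ = -(ψ-1)/(D(1-γ))`, so `ζψ + 1 = 0`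
says `ψ = 1 + D(1-γ)`; clearing the denominator `1-γ` in `D` turns `1 + D(1-γ)` into
`2 - γ - a + ((1-γ-a)²/(γ+a))ρ²`. -/

-- At `ψ = 1` both sides vanish, the left one through `c / 0 = 0`.
theorem neg_one_div_div_div_one_sub_one_div_mul {K : Type*} [Field K] {ψ : K} (hψ : ψ ≠ 0)
    (D c : K) : -(1 / D) / (c / (1 - 1 / ψ)) * ψ = -(ψ - 1) / (D * c) := by
  rw [one_sub_div hψ, div_div_eq_mul_div]
  field_simp

theorem one_add_mul_one_sub_eq {K : Type*} [Field K] {γ : K} (hγ : γ ≠ 1) (a ρ : K) :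
    1 + ((1 - γ - a) ^ 2 * ρ ^ 2 / ((γ + a) * (1 - γ)) + 1 - a / (1 - γ)) * (1 - γ) =
      2 - γ - a + (1 - γ - a) ^ 2 / (γ + a) * ρ ^ 2 := by
  have h1γ : 1 - γ ≠ 0 := sub_ne_zero.mpr hγ.symm
  rw [add_sub_assoc, add_mul, sub_mul, div_mul_cancel₀ _ h1γ,
    ← div_div, div_mul_cancel₀ _ h1γ]
  ring

theorem nonlinearity_vanishes_iff_general
    (γ a ρ : ℝ) (hγ : γ ≠ 1)
    (D : ℝ)
    (hD : D = ((1 - γ - a) ^ 2 * ρ ^ 2) / ((γ + a) * (1 - γ)) + 1 - a / (1 - γ))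
    (hD0 : D ≠ 0)
    (ψ : ℝ) (hψ0 : ψ ≠ 0)
    (φ θ k ζ : ℝ)
    (hφ : φ = 1 / ψ) (hθ : θ = (1 - γ) / (1 - φ)) (hk : k = 1 / D) (hζ : ζ = -k / θ) :
    ζ * ψ + 1 = 0 ↔ ψ = 2 - γ - a + ((1 - γ - a) ^ 2 / (γ + a)) * ρ ^ 2 := by
  have hDγ : D * (1 - γ) ≠ 0 := mul_ne_zero hD0 (sub_ne_zero.mpr hγ.symm)
  have hζψ : ζ * ψ = -(ψ - 1) / (D * (1 - γ)) := by
    rw [hζ, hk, hθ, hφ, neg_one_div_div_div_one_sub_one_div_mul hψ0]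
  rw [← one_add_mul_one_sub_eq hγ, ← hD, hζψ, neg_div, neg_add_eq_zero,
    div_eq_one_iff_eq hDγ, sub_eq_iff_eq_add']

/-- The nonlinearity exponent `ζψ + 1` in the PDE for `g` vanishes exactly when the
elasticity of intertemporal substitution satisfies
`ψ = 2 − γ − a + ((1−γ−a)²/(γ+a)) ρ²`. -/
theorem nonlinearity_vanishes_iff
    (γ a ρ : ℝ) (hγ : γ ≠ 1) (hγa : γ + a ≠ 0)
    (D : ℝ)
    (hD : D = ((1 - γ - a) ^ 2 * ρ ^ 2) / ((γ + a) * (1 - γ)) + 1 - a / (1 - γ))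
    (hD0 : D ≠ 0)
    (ψ : ℝ) (hψ0 : ψ ≠ 0) (hψ1 : ψ ≠ 1)
    (φ θ k ζ : ℝ)
    (hφ : φ = 1 / ψ) (hθ : θ = (1 - γ) / (1 - φ)) (hk : k = 1 / D) (hζ : ζ = -k / θ) :
    ζ * ψ + 1 = 0 ↔ ψ = 2 - γ - a + ((1 - γ - a) ^ 2 / (γ + a)) * ρ ^ 2 :=
  nonlinearity_vanishes_iff_general γ a ρ hγ D hD hD0 ψ hψ0 φ θ k ζ hφ hθ hk hζ
end

section
/- Fix real constants b > 0, κ > 0, β̄ > 0, set d := √(κ² + 2bβ̄²), and fix s ∈ ℝ. Define B(t) := 2b(e^{d(s−t)} − 1)/((κ + d)e^{d(s−t)} − κ + d) for t ∈ ℝ. Then B(s) = 0, the denominator (κ + d)e^{d(s−t)} − κ + d is strictly positive for every t ≤ s, and for every t ≤ s the function B is differentiable at t with B′(t) = κ B(t) + (1/2) β̄² B(t)² − b. -/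
/-!
With `E = exp (d (s - t))` and `N = (κ + d) E - κ + d`, the quotient rule gives
`B' = -4 b d² E / N²`, and clearing `N²` on the right-hand side of the Riccati equation
leaves a quadratic in `E - 1` that collapses to `-4 b d² E` exactly when
`d² = κ² + 2 b β²`. For `t ≤ s` we have `E ≥ 1`, so `N = (κ + d)(E - 1) + 2d > 0`
because `d ≥ |κ|` and `d > 0`.
-/

open Real

noncomputable def riccatiSol (b κ d s t : ℝ) : ℝ :=
  2 * b * (exp (d * (s - t)) - 1) / ((κ + d) * exp (d * (s - t)) - κ + d)

lemma riccatiSol_self (b κ d s : ℝ) : riccatiSol b κ d s s = 0 := by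
  simp [riccatiSol]

lemma riccati_denom_pos {κ d s t : ℝ} (hκd : 0 ≤ κ + d) (hd : 0 < d) (hts : t ≤ s) :
    0 < (κ + d) * exp (d * (s - t)) - κ + d := by
  have hE : 1 ≤ exp (d * (s - t)) := one_le_exp (mul_nonneg hd.le (sub_nonneg.2 hts))
  nlinarith

lemma riccati_quotient_eq {b κ β d E N : ℝ} (hd2 : d ^ 2 = κ ^ 2 + 2 * b * β ^ 2)
    (hN : N = (κ + d) * E - κ + d) (hN0 : N ≠ 0) :
    (2 * b * (-d * E) * N - 2 * b * (E - 1) * ((κ + d) * (-d * E))) / N ^ 2 =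
      κ * (2 * b * (E - 1) / N) + 1 / 2 * β ^ 2 * (2 * b * (E - 1) / N) ^ 2 - b := by
  field_simp
  subst hN
  linear_combination b * (E - 1) ^ 2 * hd2

lemma riccatiSol_hasDerivAt {b κ β d s t : ℝ} (hd2 : d ^ 2 = κ ^ 2 + 2 * b * β ^ 2)
    (hN : (κ + d) * exp (d * (s - t)) - κ + d ≠ 0) :
    HasDerivAt (riccatiSol b κ d s)
      (κ * riccatiSol b κ d s t + 1 / 2 * β ^ 2 * riccatiSol b κ d s t ^ 2 - b) t := by
  have hE : HasDerivAt (fun u => exp (d * (s - u))) (-d * exp (d * (s - t))) t := by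
    have := (((hasDerivAt_id t).const_sub s).const_mul d).exp
    simpa [mul_comm] using this
  have hquot := ((hE.sub_const 1).const_mul (2 * b)).div
    ((hE.const_mul (κ + d)).sub_const κ |>.add_const d) hN
  rwa [riccati_quotient_eq hd2 rfl hN] at hquot

theorem riccati_B_solution_general
    (b κ β : ℝ) (hb : 0 < b) (hβ : 0 < β)
    (d : ℝ) (hd : d = Real.sqrt (κ ^ 2 + 2 * b * β ^ 2))
    (s : ℝ) (B : ℝ → ℝ)
    (hB : ∀ t : ℝ, B t = 2 * b * (Real.exp (d * (s - t)) - 1)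
      / ((κ + d) * Real.exp (d * (s - t)) - κ + d)) :
    B s = 0 ∧
    (∀ t : ℝ, t ≤ s → 0 < (κ + d) * Real.exp (d * (s - t)) - κ + d) ∧
    (∀ t : ℝ, t ≤ s →
      HasDerivAt B (κ * B t + (1 / 2) * β ^ 2 * (B t) ^ 2 - b) t) := by
  have hrad : 0 < κ ^ 2 + 2 * b * β ^ 2 := by positivity
  have hdpos : 0 < d := hd ▸ sqrt_pos.2 hrad
  have hd2 : d ^ 2 = κ ^ 2 + 2 * b * β ^ 2 := hd ▸ sq_sqrt hrad.le
  have hκd : 0 ≤ κ + d := by nlinarith [mul_pos hb (pow_pos hβ 2)]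
  obtain rfl : B = riccatiSol b κ d s := funext hB
  exact ⟨riccatiSol_self b κ d s, fun t ht => riccati_denom_pos hκd hdpos ht,
    fun t ht => riccatiSol_hasDerivAt hd2 (riccati_denom_pos hκd hdpos ht).ne'⟩

/-- The explicit function `B(t) = 2b(e^{d(s−t)} − 1)/((κ+d)e^{d(s−t)} − κ + d)` with
`d = √(κ² + 2bβ̄²)` solves the Riccati ODE `B′ = κB + ½β̄²B² − b` with terminal
condition `B(s) = 0`, and its denominator is strictly positive for `t ≤ s`. -/
theorem riccati_B_solution
    (b κ β : ℝ) (hb : 0 < b) (hκ : 0 < κ) (hβ : 0 < β)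
    (d : ℝ) (hd : d = Real.sqrt (κ ^ 2 + 2 * b * β ^ 2))
    (s : ℝ) (B : ℝ → ℝ)
    (hB : ∀ t : ℝ, B t = 2 * b * (Real.exp (d * (s - t)) - 1)
      / ((κ + d) * Real.exp (d * (s - t)) - κ + d)) :
    B s = 0 ∧
    (∀ t : ℝ, t ≤ s → 0 < (κ + d) * Real.exp (d * (s - t)) - κ + d) ∧
    (∀ t : ℝ, t ≤ s →
      HasDerivAt B (κ * B t + (1 / 2) * β ^ 2 * (B t) ^ 2 - b) t) :=
  riccati_B_solution_general b κ β hb hβ d hd s B hB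
end

section
/- Fix real constants b > 0, κ > 0, β̄ > 0, ν > 0, c₀ ∈ ℝ, set d := √(κ² + 2bβ̄²), and fix s ∈ ℝ. Define B(t) := 2b(e^{d(s−t)} − 1)/((κ + d)e^{d(s−t)} − κ + d) and A(t) := (4bν/(κ² − d²))·[ln((κ+d)e^{ds} − (κ−d)e^{dt}) − ln(2d) − (1/2)((κ+d)s − (κ−d)t)] + c₀(s − t) for t ≤ s. Then A(s) = 0, the argument (κ+d)e^{ds} − (κ−d)e^{dt} of the logarithm is strictly positive for every t ≤ s, and for every t ≤ s the function A is differentiable at t with A′(t) = ν B(t) − c₀. -/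
/-!
Write `D(t) = (κ + d)e^{ds} - (κ - d)e^{dt}`. Since `d > |κ|`, `D` is positive, and
multiplying numerator and denominator of `B(t)` by `e^{dt}` gives
`B(t) = 2b(e^{ds} - e^{dt}) / D(t)`. The bracket in `A` has derivative
`-(κ - d)d e^{dt} / D(t) + (κ - d)/2 = (κ - d)(D(t) - 2d e^{dt}) / (2D(t))`, and
`D(t) - 2d e^{dt} = (κ + d)(e^{ds} - e^{dt})`, so the prefactor `4bν/(κ² - d²)` turns it into
`νB(t)`. At `t = s`, `D(s) = 2d e^{ds}` and the bracket vanishes.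
-/

open Real

lemma abs_lt_sqrt_sq_add {x ε : ℝ} (hε : 0 < ε) : |x| < √(x ^ 2 + ε) :=
  (Real.lt_sqrt (abs_nonneg x)).mpr (by rw [sq_abs]; linarith)

section RiccatiSolution

variable {κ d s : ℝ}

lemma add_mul_exp_sub_sub_mul_exp_pos (hκd : 0 < κ + d) (hdκ : κ ≤ d) (t : ℝ) :
    0 < (κ + d) * exp (d * s) - (κ - d) * exp (d * t) := by
  have hneg : (κ - d) * exp (d * t) ≤ 0 :=
    mul_nonpos_of_nonpos_of_nonneg (sub_nonpos.2 hdκ) (exp_pos _).le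
  have hpos : 0 < (κ + d) * exp (d * s) := mul_pos hκd (exp_pos _)
  linarith

lemma riccati_div_eq (b t : ℝ) :
    2 * b * (exp (d * (s - t)) - 1) / ((κ + d) * exp (d * (s - t)) - κ + d)
      = 2 * b * (exp (d * s) - exp (d * t))
        / ((κ + d) * exp (d * s) - (κ - d) * exp (d * t)) := by
  have hst : exp (d * (s - t)) * exp (d * t) = exp (d * s) := by
    rw [← exp_add]; ring_nf
  rw [← mul_div_mul_right _ _ (exp_ne_zero (d * t))]
  congr 1
  · linear_combination (2 * b) * hst
  · linear_combination (κ + d) * hst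

lemma log_riccati_bracket_self (hd : d ≠ 0) :
    log ((κ + d) * exp (d * s) - (κ - d) * exp (d * s)) - log (2 * d)
      - 1 / 2 * ((κ + d) * s - (κ - d) * s) = 0 := by
  have h : (κ + d) * exp (d * s) - (κ - d) * exp (d * s) = 2 * d * exp (d * s) := by ring
  rw [h, log_mul (mul_ne_zero two_ne_zero hd) (exp_ne_zero _), log_exp]
  ring

lemma hasDerivAt_log_riccati_bracket {t : ℝ}
    (hD : (κ + d) * exp (d * s) - (κ - d) * exp (d * t) ≠ 0) :
    HasDerivAt
      (fun t => log ((κ + d) * exp (d * s) - (κ - d) * exp (d * t)) - log (2 * d)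
        - 1 / 2 * ((κ + d) * s - (κ - d) * t))
      ((κ ^ 2 - d ^ 2) * (exp (d * s) - exp (d * t))
        / (2 * ((κ + d) * exp (d * s) - (κ - d) * exp (d * t)))) t := by
  have hexp : HasDerivAt (fun t => exp (d * t)) (exp (d * t) * d) t :=
    ((hasDerivAt_id t).const_mul d).exp.congr_deriv (by simp)
  have hlog := ((hexp.const_mul (κ - d)).const_sub ((κ + d) * exp (d * s))).log hD
  have hlin := (((hasDerivAt_id t).const_mul (κ - d)).const_sub ((κ + d) * s)).const_mul (1 / 2)
  refine ((hlog.sub_const (log (2 * d))).sub hlin).congr_deriv ?_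
  field_simp
  ring

end RiccatiSolution

theorem ode_A_solution_general
    (b κ β ν c₀ : ℝ) (hb : 0 < b) (hβ : 0 < β)
    (d : ℝ) (hd : d = Real.sqrt (κ ^ 2 + 2 * b * β ^ 2))
    (s : ℝ) (B A : ℝ → ℝ)
    (hB : ∀ t : ℝ, B t = 2 * b * (Real.exp (d * (s - t)) - 1)
      / ((κ + d) * Real.exp (d * (s - t)) - κ + d))
    (hA : ∀ t : ℝ, A t = (4 * b * ν / (κ ^ 2 - d ^ 2)) *
        (Real.log ((κ + d) * Real.exp (d * s) - (κ - d) * Real.exp (d * t))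
          - Real.log (2 * d) - (1 / 2) * ((κ + d) * s - (κ - d) * t))
      + c₀ * (s - t)) :
    A s = 0 ∧
    (∀ t : ℝ, t ≤ s → 0 < (κ + d) * Real.exp (d * s) - (κ - d) * Real.exp (d * t)) ∧
    (∀ t : ℝ, t ≤ s → HasDerivAt A (ν * B t - c₀) t) := by
  have hκd : |κ| < d := hd ▸ abs_lt_sqrt_sq_add (by positivity)
  have hpos : ∀ t, 0 < (κ + d) * exp (d * s) - (κ - d) * exp (d * t) :=
    add_mul_exp_sub_sub_mul_exp_pos (by linarith [neg_abs_le κ]) (le_abs_self κ |>.trans hκd.le)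
  refine ⟨?_, fun t _ => hpos t, fun t _ => ?_⟩
  · rw [hA, log_riccati_bracket_self (abs_nonneg κ |>.trans_lt hκd).ne']
    ring
  · have hκd2 : κ ^ 2 - d ^ 2 ≠ 0 := by nlinarith [abs_nonneg κ, sq_abs κ]
    have hlin : HasDerivAt (fun t => c₀ * (s - t)) (-c₀) t := by
      simpa using ((hasDerivAt_id t).const_sub s).const_mul c₀
    rw [funext hA]
    refine (((hasDerivAt_log_riccati_bracket (hpos t).ne').const_mul _).add hlin).congr_deriv ?_
    rw [hB, riccati_div_eq]
    field_simp
    ring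

/-- The explicit function
`A(t) = (4bν/(κ²−d²))[ln((κ+d)e^{ds} − (κ−d)e^{dt}) − ln(2d) − ½((κ+d)s − (κ−d)t)] + c₀(s−t)`
solves the ODE `A′(t) = νB(t) − c₀` with terminal condition `A(s) = 0`, and the
argument of the logarithm is strictly positive for `t ≤ s`. -/
theorem ode_A_solution
    (b κ β ν c₀ : ℝ) (hb : 0 < b) (hκ : 0 < κ) (hβ : 0 < β) (hν : 0 < ν)
    (d : ℝ) (hd : d = Real.sqrt (κ ^ 2 + 2 * b * β ^ 2))
    (s : ℝ) (B A : ℝ → ℝ)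
    (hB : ∀ t : ℝ, B t = 2 * b * (Real.exp (d * (s - t)) - 1)
      / ((κ + d) * Real.exp (d * (s - t)) - κ + d))
    (hA : ∀ t : ℝ, A t = (4 * b * ν / (κ ^ 2 - d ^ 2)) *
        (Real.log ((κ + d) * Real.exp (d * s) - (κ - d) * Real.exp (d * t))
          - Real.log (2 * d) - (1 / 2) * ((κ + d) * s - (κ - d) * t))
      + c₀ * (s - t)) :
    A s = 0 ∧
    (∀ t : ℝ, t ≤ s → 0 < (κ + d) * Real.exp (d * s) - (κ - d) * Real.exp (d * t)) ∧
    (∀ t : ℝ, t ≤ s → HasDerivAt A (ν * B t - c₀) t) :=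
  ode_A_solution_general b κ β ν c₀ hb hβ d hd s B A hB hA
end

section
/- Fix real constants b > 0, κ > 0, β̄ > 0, ν > 0, c₀ ∈ ℝ, T > 0, δ > 0 and ψ ∈ ℝ, set d := √(κ² + 2bβ̄²), and for t ≤ s define B(t,s) := 2b(e^{d(s−t)} − 1)/((κ + d)e^{d(s−t)} − κ + d) and A(t,s) := (4bν/(κ² − d²))·[ln((κ+d)e^{ds} − (κ−d)e^{dt}) − ln(2d) − (1/2)((κ+d)s − (κ−d)t)] + c₀(s − t). Define g(t,y) := δ^ψ ∫_t^T e^{A(t,s) − B(t,s)y} ds for (t,y) ∈ [0,T) × [0,∞). Then for every (t,y) ∈ [0,T) × [0,∞): g(t,y) > 0, the partial derivative ∂_y g(t,y) exists and equals −δ^ψ ∫_t^T B(t,s) e^{A(t,s) − B(t,s)y} ds, hence ∂_y g(t,y) ≤ 0, and moreover |∂_y g(t,y)| ≤ (b/κ) g(t,y). -/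
/-!
Since `d = √(κ² + 2bβ²) ≥ κ`, the Riccati solution `B(t, ·)` is continuous with values in
`[0, b/κ]` on `[t, T]`, and `A(t, ·)` is continuous there because the argument of its logarithm
is positive. The `y`-derivative `-B e^{A - B y}` of the integrand is bounded on `[t, T]`
uniformly for `y` in a neighbourhood, so one may differentiate under the integral sign; the
bounds `0 ≤ B ≤ b/κ` then give `0 ≤ -g_y ≤ (b/κ) g`.
-/

open Set intervalIntegral

section ExpIntegral

variable {a w : ℝ → ℝ} {t T : ℝ}

lemma intervalIntegrable_exp_sub_mul (ha : ContinuousOn a (Icc t T))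
    (hw : ContinuousOn w (Icc t T)) (htT : t ≤ T) (y : ℝ) :
    IntervalIntegrable (fun s => Real.exp (a s - w s * y)) MeasureTheory.volume t T :=
  ContinuousOn.intervalIntegrable (by
    rw [uIcc_of_le htT]
    exact Real.continuous_exp.comp_continuousOn (ha.sub (hw.mul continuousOn_const)))

lemma intervalIntegrable_mul_exp_sub_mul (ha : ContinuousOn a (Icc t T))
    (hw : ContinuousOn w (Icc t T)) (htT : t ≤ T) (y : ℝ) :
    IntervalIntegrable (fun s => w s * Real.exp (a s - w s * y)) MeasureTheory.volume t T :=
  ContinuousOn.intervalIntegrable (by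
    rw [uIcc_of_le htT]
    exact hw.mul (Real.continuous_exp.comp_continuousOn (ha.sub (hw.mul continuousOn_const))))

lemma integral_exp_sub_mul_pos (ha : ContinuousOn a (Icc t T))
    (hw : ContinuousOn w (Icc t T)) (htT : t < T) (y : ℝ) :
    0 < ∫ s in t..T, Real.exp (a s - w s * y) :=
  intervalIntegral_pos_of_pos_on (intervalIntegrable_exp_sub_mul ha hw htT.le y)
    (fun _ _ => Real.exp_pos _) htT

lemma hasDerivAt_integral_exp_sub_mul (ha : ContinuousOn a (Icc t T))
    (hw : ContinuousOn w (Icc t T)) (htT : t ≤ T) (y : ℝ) :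
    HasDerivAt (fun x => ∫ s in t..T, Real.exp (a s - w s * x))
      (-∫ s in t..T, w s * Real.exp (a s - w s * y)) y := by
  obtain ⟨M, hM⟩ := isCompact_Icc.exists_bound_of_continuousOn hw
  have hIoc : uIoc t T ⊆ Icc t T := by
    rw [uIoc_of_le htT]; exact Ioc_subset_Icc_self
  have hdom : ∀ s ∈ Icc t T, ∀ x ∈ Metric.ball y 1,
      ‖-(w s * Real.exp (a s - w s * x))‖ ≤ M * Real.exp (a s + M * (|y| + 1)) := by
    intro s hs x hx
    have hws : |w s| ≤ M := hM s hs
    have hxy : |x| ≤ |y| + 1 := by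
      have := abs_sub_abs_le_abs_sub x y
      rw [Metric.mem_ball, Real.dist_eq] at hx
      linarith
    have hwx : |w s * x| ≤ M * (|y| + 1) := by
      rw [abs_mul]; exact mul_le_mul hws hxy (abs_nonneg x) ((abs_nonneg _).trans hws)
    rw [norm_neg, norm_mul, Real.norm_eq_abs, Real.norm_of_nonneg (Real.exp_pos _).le]
    refine mul_le_mul hws (Real.exp_le_exp.2 ?_) (Real.exp_pos _).le ((abs_nonneg _).trans hws)
    linarith [neg_abs_le (w s * x)]
  have key := hasDerivAt_integral_of_dominated_loc_of_deriv_le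
    (F := fun x s => Real.exp (a s - w s * x))
    (F' := fun x s => -(w s * Real.exp (a s - w s * x)))
    (bound := fun s => M * Real.exp (a s + M * (|y| + 1)))
    (Metric.ball_mem_nhds y one_pos)
    (Filter.Eventually.of_forall fun x =>
      ((intervalIntegrable_exp_sub_mul ha hw htT x).def'.aestronglyMeasurable))
    (intervalIntegrable_exp_sub_mul ha hw htT y)
    (intervalIntegrable_mul_exp_sub_mul ha hw htT y).def'.aestronglyMeasurable.neg
    (MeasureTheory.ae_of_all _ fun s hs => hdom s (hIoc hs))
    (ContinuousOn.intervalIntegrable (by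
      rw [uIcc_of_le htT]
      exact continuousOn_const.mul
        (Real.continuous_exp.comp_continuousOn (ha.add continuousOn_const))))
    (MeasureTheory.ae_of_all _ fun s _ x _ => by
      simpa [mul_comm] using (((hasDerivAt_id x).const_mul (w s)).const_sub (a s)).exp)
  simpa only [integral_neg] using key.2

lemma integral_mul_exp_sub_mul_le {M : ℝ} (ha : ContinuousOn a (Icc t T))
    (hw : ContinuousOn w (Icc t T)) (htT : t ≤ T) (hwM : ∀ s ∈ Icc t T, w s ≤ M) (y : ℝ) :
    ∫ s in t..T, w s * Real.exp (a s - w s * y)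
      ≤ M * ∫ s in t..T, Real.exp (a s - w s * y) := by
  rw [← integral_const_mul]
  exact integral_mono_on htT (intervalIntegrable_mul_exp_sub_mul ha hw htT y)
    ((intervalIntegrable_exp_sub_mul ha hw htT y).const_mul M)
    fun s hs => mul_le_mul_of_nonneg_right (hwM s hs) (Real.exp_pos _).le

lemma integral_mul_exp_sub_mul_nonneg (htT : t ≤ T) (hw : ∀ s ∈ Icc t T, 0 ≤ w s) (y : ℝ) :
    0 ≤ ∫ s in t..T, w s * Real.exp (a s - w s * y) :=
  integral_nonneg htT fun s hs => mul_nonneg (hw s hs) (Real.exp_pos _).le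

end ExpIntegral

section HestonRiccati

variable {b κ d : ℝ}

lemma le_sqrt_sq_add_two_mul_sq (hb : 0 ≤ b) (κ β : ℝ) :
    κ ≤ Real.sqrt (κ ^ 2 + 2 * b * β ^ 2) :=
  (le_abs_self κ).trans (Real.abs_le_sqrt (by nlinarith [sq_nonneg β]))

lemma riccatiB_denom_pos (hκ : 0 < κ) (hκd : κ ≤ d) {τ : ℝ} (hτ : 0 ≤ τ) :
    0 < (κ + d) * Real.exp (d * τ) - κ + d := by
  have he : 1 ≤ Real.exp (d * τ) := Real.one_le_exp (by nlinarith)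
  nlinarith

lemma riccatiB_mem_Icc (hb : 0 ≤ b) (hκ : 0 < κ) (hκd : κ ≤ d) {τ : ℝ} (hτ : 0 ≤ τ) :
    2 * b * (Real.exp (d * τ) - 1) / ((κ + d) * Real.exp (d * τ) - κ + d) ∈ Icc 0 (b / κ) := by
  have he : 1 ≤ Real.exp (d * τ) := Real.one_le_exp (by nlinarith)
  have hden := riccatiB_denom_pos hκ hκd hτ
  refine ⟨div_nonneg (by nlinarith) hden.le, ?_⟩
  rw [div_le_div_iff₀ hden hκ]
  -- `b * den - 2 * b * κ * (e - 1) = b * ((d - κ) * e + d + κ)` with `e = exp (d * τ)`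
  nlinarith [mul_nonneg hb (mul_nonneg (sub_nonneg.2 hκd) (zero_le_one.trans he))]

lemma continuousOn_riccatiB (hκ : 0 < κ) (hκd : κ ≤ d) (b t : ℝ) :
    ContinuousOn (fun s => 2 * b * (Real.exp (d * (s - t)) - 1)
      / ((κ + d) * Real.exp (d * (s - t)) - κ + d)) (Ici t) :=
  ContinuousOn.div (by fun_prop) (by fun_prop) fun s hs =>
    (riccatiB_denom_pos hκ hκd (sub_nonneg.2 hs)).ne'

lemma continuous_riccatiA (hκ : 0 < κ) (hκd : κ ≤ d) (c c₀ t : ℝ) :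
    Continuous (fun s => c * (Real.log ((κ + d) * Real.exp (d * s) - (κ - d) * Real.exp (d * t))
      - Real.log (2 * d) - (1 / 2) * ((κ + d) * s - (κ - d) * t)) + c₀ * (s - t)) := by
  have hlog : Continuous fun s =>
      Real.log ((κ + d) * Real.exp (d * s) - (κ - d) * Real.exp (d * t)) :=
    Continuous.log (by fun_prop) fun s => by
      nlinarith [Real.exp_pos (d * s), Real.exp_pos (d * t)]
  fun_prop

end HestonRiccati

theorem heston_g_y_derivative_bounds_general
    (b κ β ν c₀ T δ ψ : ℝ)
    (hb : 0 < b) (hκ : 0 < κ) (hδ : 0 < δ)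
    (d : ℝ) (hd : d = Real.sqrt (κ ^ 2 + 2 * b * β ^ 2))
    (B A : ℝ → ℝ → ℝ)
    (hB : ∀ t s : ℝ, t ≤ s → B t s = 2 * b * (Real.exp (d * (s - t)) - 1)
      / ((κ + d) * Real.exp (d * (s - t)) - κ + d))
    (hA : ∀ t s : ℝ, t ≤ s →
      A t s = (4 * b * ν / (κ ^ 2 - d ^ 2)) *
        (Real.log ((κ + d) * Real.exp (d * s) - (κ - d) * Real.exp (d * t))
          - Real.log (2 * d) - (1 / 2) * ((κ + d) * s - (κ - d) * t))
      + c₀ * (s - t))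
    (g : ℝ → ℝ → ℝ)
    (hg : ∀ t y : ℝ, g t y = δ ^ ψ * ∫ s in t..T, Real.exp (A t s - B t s * y)) :
    ∀ t ∈ Set.Ico (0 : ℝ) T, ∀ y ∈ Set.Ici (0 : ℝ),
      0 < g t y ∧
      HasDerivAt (fun z => g t z)
        (-(δ ^ ψ) * ∫ s in t..T, B t s * Real.exp (A t s - B t s * y)) y ∧
      deriv (fun z => g t z) y ≤ 0 ∧
      |deriv (fun z => g t z) y| ≤ (b / κ) * g t y := by
  intro t ht y _
  have hκd : κ ≤ d := hd ▸ le_sqrt_sq_add_two_mul_sq hb.le κ β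
  have hBc : ContinuousOn (B t) (Icc t T) :=
    ((continuousOn_riccatiB hκ hκd b t).mono Icc_subset_Ici_self).congr fun s hs => hB t s hs.1
  have hAc : ContinuousOn (A t) (Icc t T) :=
    (continuous_riccatiA hκ hκd _ c₀ t).continuousOn.congr fun s hs => hA t s hs.1
  have hBmem : ∀ s ∈ Icc t T, B t s ∈ Icc 0 (b / κ) := fun s hs =>
    hB t s hs.1 ▸ riccatiB_mem_Icc hb.le hκ hκd (sub_nonneg.2 hs.1)
  have hδψ : 0 < δ ^ ψ := Real.rpow_pos_of_pos hδ ψ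
  have hder : HasDerivAt (fun z => g t z)
      (-(δ ^ ψ) * ∫ s in t..T, B t s * Real.exp (A t s - B t s * y)) y := by
    simpa only [hg, neg_mul_comm] using
      (hasDerivAt_integral_exp_sub_mul hAc hBc ht.2.le y).const_mul (δ ^ ψ)
  have hJ0 := integral_mul_exp_sub_mul_nonneg (a := A t) ht.2.le (fun s hs => (hBmem s hs).1) y
  have hJle := integral_mul_exp_sub_mul_le hAc hBc ht.2.le (fun s hs => (hBmem s hs).2) y
  refine ⟨hg t y ▸ mul_pos hδψ (integral_exp_sub_mul_pos hAc hBc ht.2 y), hder, ?_, ?_⟩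
  · rw [hder.deriv]; nlinarith
  · rw [hder.deriv, hg, abs_mul, abs_neg, abs_of_pos hδψ, abs_of_nonneg hJ0]
    calc δ ^ ψ * _ ≤ δ ^ ψ * ((b / κ) * ∫ s in t..T, Real.exp (A t s - B t s * y)) :=
          mul_le_mul_of_nonneg_left hJle hδψ.le
      _ = b / κ * (δ ^ ψ * ∫ s in t..T, Real.exp (A t s - B t s * y)) := by ring

/-- Positivity of the explicit value-function factor `g` in the Heston model, the
explicit formula for its `y`-derivative, its nonpositivity, and the logarithmic
derivative bound `|g_y| ≤ (b/κ) g`. -/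
theorem heston_g_y_derivative_bounds
    (b κ β ν c₀ T δ ψ : ℝ)
    (hb : 0 < b) (hκ : 0 < κ) (hβ : 0 < β) (hν : 0 < ν) (hT : 0 < T) (hδ : 0 < δ)
    (d : ℝ) (hd : d = Real.sqrt (κ ^ 2 + 2 * b * β ^ 2))
    (B A : ℝ → ℝ → ℝ)
    (hB : ∀ t s : ℝ, t ≤ s → B t s = 2 * b * (Real.exp (d * (s - t)) - 1)
      / ((κ + d) * Real.exp (d * (s - t)) - κ + d))
    (hA : ∀ t s : ℝ, t ≤ s →
      A t s = (4 * b * ν / (κ ^ 2 - d ^ 2)) *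
        (Real.log ((κ + d) * Real.exp (d * s) - (κ - d) * Real.exp (d * t))
          - Real.log (2 * d) - (1 / 2) * ((κ + d) * s - (κ - d) * t))
      + c₀ * (s - t))
    (g : ℝ → ℝ → ℝ)
    (hg : ∀ t y : ℝ, g t y = δ ^ ψ * ∫ s in t..T, Real.exp (A t s - B t s * y)) :
    ∀ t ∈ Set.Ico (0 : ℝ) T, ∀ y ∈ Set.Ici (0 : ℝ),
      0 < g t y ∧
      HasDerivAt (fun z => g t z)
        (-(δ ^ ψ) * ∫ s in t..T, B t s * Real.exp (A t s - B t s * y)) y ∧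
      deriv (fun z => g t z) y ≤ 0 ∧
      |deriv (fun z => g t z) y| ≤ (b / κ) * g t y :=
  heston_g_y_derivative_bounds_general b κ β ν c₀ T δ ψ hb hκ hδ d hd B A hB hA g hg
end

section
/- Fix real constants b > 0, κ > 0, β̄ > 0, ν > 0, c₀ ∈ ℝ, T > 0, δ > 0 and ψ ∈ ℝ, set d := √(κ² + 2bβ̄²), and for t ≤ s define B(t,s) := 2b(e^{d(s−t)} − 1)/((κ + d)e^{d(s−t)} − κ + d) and A(t,s) := (4bν/(κ² − d²))·[ln((κ+d)e^{ds} − (κ−d)e^{dt}) − ln(2d) − (1/2)((κ+d)s − (κ−d)t)] + c₀(s − t). Define g(t,y) := δ^ψ ∫_t^T e^{A(t,s) − B(t,s)y} ds for (t,y) ∈ [0,T) × [0,∞). Let further γ > 1, a > 0, k > 0, λ̄ ∈ ℝ and ρ ∈ [−1, 0], and define π*(t,y) := λ̄/(γ+a) + ((1−γ−a)kβ̄ρ)/((γ+a)(1−γ)) · (∂_y g(t,y)/g(t,y)) and K_π := λ̄/(γ+a) + ((1−γ−a)kβ̄|ρ|b)/((γ+a)(1−γ)κ). Then for every (t,y)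 ∈ [0,T) × [0,∞): λ̄/(γ+a) ≤ π*(t,y) ≤ K_π. -/
/-!
Up to the positive factor `δ ^ ψ`, `g t` is the Laplace-type integral `y ↦ ∫ₜᵀ e^{A - B y}`.
Differentiating under the integral sign, `-g_y / g` is the average of `B t ·` over `[t, T]`
with respect to the positive weight `e^{A - B y}`, so it lies in `[0, b / κ]` because the
explicit Riccati solution `B` does. The coefficient of `g_y / g`
in `π*` is nonpositive, which turns these two bounds into the two bounds on `π*`.
-/

open Real Set Metric MeasureTheory

theorem hasDerivAt_integral_exp_sub_mul_s14 {A B : ℝ → ℝ} {t T : ℝ}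
    (hA : ContinuousOn A (uIcc t T)) (hB : ContinuousOn B (uIcc t T)) (y : ℝ) :
    HasDerivAt (fun x => ∫ s in t..T, exp (A s - B s * x))
      (∫ s in t..T, -(B s * exp (A s - B s * y))) y := by
  obtain ⟨M, hM⟩ := isCompact_uIcc.exists_bound_of_continuousOn hB
  have hM0 : 0 ≤ M := (norm_nonneg _).trans (hM t left_mem_uIcc)
  have hF : ∀ x, ContinuousOn (fun s => exp (A s - B s * x)) (uIcc t T) := fun x =>
    (hA.sub (hB.mul continuousOn_const)).rexp
  have hF' : ContinuousOn (fun s => -(B s * exp (A s - B s * y))) (uIcc t T) :=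
    (hB.mul (hF y)).neg
  have h_bound : ∀ s ∈ uIoc t T, ∀ x ∈ ball y 1,
      ‖-(B s * exp (A s - B s * x))‖ ≤ M * exp (A s + M * (|y| + 1)) := by
    intro s hs x hx
    have hBs : |B s| ≤ M := hM s (uIoc_subset_uIcc hs)
    have hx' : |x| ≤ |y| + 1 := by
      have := abs_sub_abs_le_abs_sub x y
      rw [mem_ball, dist_eq] at hx
      linarith
    have hexp : -(B s * x) ≤ M * (|y| + 1) :=
      (neg_le_abs _).trans (abs_mul (B s) x ▸ mul_le_mul hBs hx' (abs_nonneg x) hM0)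
    rw [norm_neg, norm_mul, norm_of_nonneg (exp_pos _).le]
    exact mul_le_mul hBs (exp_le_exp.2 (by linarith)) (exp_pos _).le hM0
  refine (intervalIntegral.hasDerivAt_integral_of_dominated_loc_of_deriv_le
    (ball_mem_nhds y one_pos)
    (Filter.Eventually.of_forall fun x =>
      ((hF x).mono uIoc_subset_uIcc).aestronglyMeasurable measurableSet_uIoc)
    ((hF y).intervalIntegrable)
    ((hF'.mono uIoc_subset_uIcc).aestronglyMeasurable measurableSet_uIoc)
    (Filter.Eventually.of_forall h_bound)
    (continuousOn_const.mul (hA.add continuousOn_const).rexp).intervalIntegrable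
    (Filter.Eventually.of_forall fun s _ x _ => ?_)).2
  simpa [neg_mul, mul_comm] using (((hasDerivAt_id x).const_mul (B s)).const_sub (A s)).exp

theorem deriv_integral_exp_sub_mul_div_mem_Icc {A B : ℝ → ℝ} {t T M : ℝ} (htT : t < T)
    (hA : ContinuousOn A (Icc t T)) (hB : ContinuousOn B (Icc t T))
    (hBM : ∀ s ∈ Icc t T, B s ∈ Icc 0 M) (y : ℝ) :
    deriv (fun x => ∫ s in t..T, exp (A s - B s * x)) y
        / (∫ s in t..T, exp (A s - B s * y)) ∈ Icc (-M) 0 := by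
  have hIcc := uIcc_of_le htT.le
  rw [(hasDerivAt_integral_exp_sub_mul_s14 (hIcc ▸ hA) (hIcc ▸ hB) y).deriv,
    intervalIntegral.integral_neg, neg_div]
  set I := ∫ s in t..T, exp (A s - B s * y)
  have hI_int : IntervalIntegrable (fun s => exp (A s - B s * y)) volume t T :=
    ((hA.sub (hB.mul continuousOn_const)).rexp).intervalIntegrable_of_Icc htT.le
  have hI : 0 < I :=
    intervalIntegral.intervalIntegral_pos_of_pos_on hI_int (fun s _ => exp_pos _) htT
  have hJ0 : 0 ≤ ∫ s in t..T, B s * exp (A s - B s * y) :=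
    intervalIntegral.integral_nonneg htT.le fun s hs => mul_nonneg (hBM s hs).1 (exp_pos _).le
  have hJM : ∫ s in t..T, B s * exp (A s - B s * y) ≤ M * I := by
    rw [← intervalIntegral.integral_const_mul]
    refine intervalIntegral.integral_mono_on htT.le
      ((hB.mul (hA.sub (hB.mul continuousOn_const)).rexp).intervalIntegrable_of_Icc htT.le)
      (hI_int.const_mul M) fun s hs => ?_
    exact mul_le_mul_of_nonneg_right (hBM s hs).2 (exp_pos _).le
  exact ⟨neg_le_neg ((div_le_iff₀ hI).2 hJM), neg_nonpos.2 (div_nonneg hJ0 hI.le)⟩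

theorem riccati_denominator_pos {κ d x : ℝ} (hκ : 0 < κ) (hκd : κ ≤ d) (hx : 1 ≤ x) :
    0 < (κ + d) * x - κ + d := by
  nlinarith

theorem riccati_solution_mem_Icc {b κ d x : ℝ} (hb : 0 ≤ b) (hκ : 0 < κ) (hκd : κ ≤ d)
    (hx : 1 ≤ x) : 2 * b * (x - 1) / ((κ + d) * x - κ + d) ∈ Icc 0 (b / κ) := by
  have hden := riccati_denominator_pos hκ hκd hx
  refine ⟨div_nonneg (by nlinarith) hden.le, ?_⟩
  rw [div_le_div_iff₀ hden hκ]
  -- the difference of the two sides is `b (d - κ) (x + 1)`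
  nlinarith [mul_nonneg hb (mul_nonneg (sub_nonneg.2 hκd) (by linarith : (0 : ℝ) ≤ x + 1))]

theorem portfolio_coeff_nonpos {γ a k β ρ : ℝ} (hγ : 1 ≤ γ) (ha : 0 ≤ a) (hk : 0 ≤ k)
    (hβ : 0 ≤ β) (hρ : ρ ≤ 0) : (1 - γ - a) * k * β * ρ / ((γ + a) * (1 - γ)) ≤ 0 := by
  refine div_nonpos_of_nonneg_of_nonpos ?_
    (mul_nonpos_of_nonneg_of_nonpos (by linarith) (by linarith))
  have : 0 ≤ (1 - γ - a) * ρ := mul_nonneg_of_nonpos_of_nonpos (by linarith) hρ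
  nlinarith [mul_nonneg this (mul_nonneg hk hβ)]

theorem heston_optimal_portfolio_bounds_general
    (b κ β ν c₀ T δ ψ : ℝ)
    (hb : 0 < b) (hκ : 0 < κ) (hβ : 0 < β) (hδ : 0 < δ)
    (d : ℝ) (hd : d = Real.sqrt (κ ^ 2 + 2 * b * β ^ 2))
    (B A : ℝ → ℝ → ℝ)
    (hB : ∀ t s : ℝ, t ≤ s → B t s = 2 * b * (Real.exp (d * (s - t)) - 1)
      / ((κ + d) * Real.exp (d * (s - t)) - κ + d))
    (hA : ∀ t s : ℝ, t ≤ s →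
      A t s = (4 * b * ν / (κ ^ 2 - d ^ 2)) *
        (Real.log ((κ + d) * Real.exp (d * s) - (κ - d) * Real.exp (d * t))
          - Real.log (2 * d) - (1 / 2) * ((κ + d) * s - (κ - d) * t))
      + c₀ * (s - t))
    (g : ℝ → ℝ → ℝ)
    (hg : ∀ t y : ℝ, g t y = δ ^ ψ * ∫ s in t..T, Real.exp (A t s - B t s * y))
    (γ a k lam ρ : ℝ)
    (hγ : 1 < γ) (ha : 0 < a) (hk : 0 < k) (hρ : ρ ∈ Set.Icc (-1 : ℝ) 0)
    (πstar : ℝ → ℝ → ℝ)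
    (hπstar : ∀ t y : ℝ, πstar t y = lam / (γ + a)
      + ((1 - γ - a) * k * β * ρ) / ((γ + a) * (1 - γ))
        * (deriv (fun z => g t z) y / g t y))
    (Kπ : ℝ)
    (hKπ : Kπ = lam / (γ + a)
      + ((1 - γ - a) * k * β * |ρ| * b) / ((γ + a) * (1 - γ) * κ)) :
    ∀ t ∈ Set.Ico (0 : ℝ) T, ∀ y ∈ Set.Ici (0 : ℝ),
      lam / (γ + a) ≤ πstar t y ∧ πstar t y ≤ Kπ := by
  intro t ⟨_, htT⟩ y _
  have hκd : κ ≤ d := hd ▸ Real.le_sqrt_of_sq_le (le_add_of_nonneg_right (by positivity))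
  have hexp : ∀ s ∈ Icc t T, 1 ≤ exp (d * (s - t)) := fun s hs =>
    one_le_exp (mul_nonneg (hκ.le.trans hκd) (sub_nonneg.2 hs.1))
  have hBc : ContinuousOn (B t) (Icc t T) :=
    (ContinuousOn.div (by fun_prop) (by fun_prop) fun s hs =>
      (riccati_denominator_pos hκ hκd (hexp s hs)).ne').congr fun s hs => hB t s hs.1
  have hlog : ∀ s, (κ + d) * exp (d * s) - (κ - d) * exp (d * t) ≠ 0 := fun s =>
    (by nlinarith [exp_pos (d * s), exp_pos (d * t)] : (0 : ℝ) < _).ne'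
  have hAc : ContinuousOn (A t) (Icc t T) :=
    (Continuous.continuousOn (by fun_prop (disch := exact hlog _))).congr fun s hs => hA t s hs.1
  have hBM : ∀ s ∈ Icc t T, B t s ∈ Icc 0 (b / κ) := fun s hs =>
    hB t s hs.1 ▸ riccati_solution_mem_Icc hb.le hκ hκd (hexp s hs)
  have hratio : deriv (fun z => g t z) y / g t y ∈ Icc (-(b / κ)) 0 := by
    simp only [hg t]
    rw [deriv_const_mul_field', mul_div_mul_left _ _ (rpow_pos_of_pos hδ ψ).ne']
    exact deriv_integral_exp_sub_mul_div_mem_Icc htT hAc hBc hBM y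
  have hC := portfolio_coeff_nonpos hγ.le ha.le hk.le hβ.le hρ.2
  rw [hπstar, hKπ, abs_of_nonpos hρ.2]
  constructor
  · linarith [mul_nonneg_of_nonpos_of_nonpos hC hratio.2]
  · have := mul_le_mul_of_nonpos_left hratio.1 hC
    linarith [show (1 - γ - a) * k * β * -ρ * b / ((γ + a) * (1 - γ) * κ)
      = (1 - γ - a) * k * β * ρ / ((γ + a) * (1 - γ)) * -(b / κ) by
        rw [← neg_div, div_mul_div_comm]; ring]

/-- Bounds on the candidate optimal portfolio proportion in the robust
consumption–portfolio problem for the Heston model: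
`λ̄/(γ+a) ≤ π*(t,y) ≤ K_π` on `[0,T) × [0,∞)`. -/
theorem heston_optimal_portfolio_bounds
    (b κ β ν c₀ T δ ψ : ℝ)
    (hb : 0 < b) (hκ : 0 < κ) (hβ : 0 < β) (hν : 0 < ν) (hT : 0 < T) (hδ : 0 < δ)
    (d : ℝ) (hd : d = Real.sqrt (κ ^ 2 + 2 * b * β ^ 2))
    (B A : ℝ → ℝ → ℝ)
    (hB : ∀ t s : ℝ, t ≤ s → B t s = 2 * b * (Real.exp (d * (s - t)) - 1)
      / ((κ + d) * Real.exp (d * (s - t)) - κ + d))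
    (hA : ∀ t s : ℝ, t ≤ s →
      A t s = (4 * b * ν / (κ ^ 2 - d ^ 2)) *
        (Real.log ((κ + d) * Real.exp (d * s) - (κ - d) * Real.exp (d * t))
          - Real.log (2 * d) - (1 / 2) * ((κ + d) * s - (κ - d) * t))
      + c₀ * (s - t))
    (g : ℝ → ℝ → ℝ)
    (hg : ∀ t y : ℝ, g t y = δ ^ ψ * ∫ s in t..T, Real.exp (A t s - B t s * y))
    (γ a k lam ρ : ℝ)
    (hγ : 1 < γ) (ha : 0 < a) (hk : 0 < k) (hρ : ρ ∈ Set.Icc (-1 : ℝ) 0)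
    (πstar : ℝ → ℝ → ℝ)
    (hπstar : ∀ t y : ℝ, πstar t y = lam / (γ + a)
      + ((1 - γ - a) * k * β * ρ) / ((γ + a) * (1 - γ))
        * (deriv (fun z => g t z) y / g t y))
    (Kπ : ℝ)
    (hKπ : Kπ = lam / (γ + a)
      + ((1 - γ - a) * k * β * |ρ| * b) / ((γ + a) * (1 - γ) * κ)) :
    ∀ t ∈ Set.Ico (0 : ℝ) T, ∀ y ∈ Set.Ici (0 : ℝ),
      lam / (γ + a) ≤ πstar t y ∧ πstar t y ≤ Kπ :=
  heston_optimal_portfolio_bounds_general b κ β ν c₀ T δ ψ hb hκ hβ hδ d hd B A hB hA g hg γ a k lam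
    ρ hγ ha hk hρ πstar hπstar Kπ hKπ
end

section
/- Fix real constants b > 0, κ > 0, β̄ > 0, ν > 0, T > 0, δ > 0 and ψ ∈ ℝ, and additionally assume c₀ ≥ 0. Set d := √(κ² + 2bβ̄²), and for t ≤ s define B(t,s) := 2b(e^{d(s−t)} − 1)/((κ + d)e^{d(s−t)} − κ + d) and A(t,s) := (4bν/(κ² − d²))·[ln((κ+d)e^{ds} − (κ−d)e^{dt}) − ln(2d) − (1/2)((κ+d)s − (κ−d)t)] + c₀(s − t). Define g(t,y) := δ^ψ ∫_t^T e^{A(t,s) − B(t,s)y} ds for (t,y) ∈ [0,T) × [0,∞). Then for every (t,y) ∈ [0,T) × [0,∞): δ^ψ / g(t,y) ≤ 1/(T − t) + b y + (1/2) ν b (T − t). -/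
/-!
Write `τ = s - t` and `M = b y + ½ν b (T - t)`. Since `tanh u ≤ u`, the Riccati solution satisfies
`B ≤ b τ`; the logarithmic part of `A` has `τ`-derivative proportional to `B`, so integrating the
same bound gives `A ≥ -½ν b τ²`. Hence the integrand of `g` dominates `exp (-M τ)` on `[t, T]`, and
`∫₀^{T-t} exp (-M τ) dτ = (1 - e^{-M(T-t)}) / M ≥ (T - t) / (1 + M (T - t))` by `e^x ≥ 1 + x`.
-/

open Real Set MeasureTheory

theorem le_of_hasDerivAt_le {f g f' g' : ℝ → ℝ} {a b : ℝ} (hab : a ≤ b) (ha : f a ≤ g a)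
    (hf : ∀ x, HasDerivAt f (f' x) x) (hg : ∀ x, HasDerivAt g (g' x) x)
    (h : ∀ x ∈ Ico a b, f' x ≤ g' x) : f b ≤ g b :=
  image_le_of_deriv_right_le_deriv_boundary
    (fun x _ => (hf x).continuousAt.continuousWithinAt) (fun x _ => (hf x).hasDerivWithinAt) ha
    (fun x _ => (hg x).continuousAt.continuousWithinAt) (fun x _ => (hg x).hasDerivWithinAt) h
    ⟨hab, le_rfl⟩

-- `tanh (x / 2) ≤ x / 2`
theorem two_mul_exp_sub_one_le {x : ℝ} (hx : 0 ≤ x) : 2 * (exp x - 1) ≤ x * (exp x + 1) := by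
  refine le_of_hasDerivAt_le (f' := fun x => 2 * exp x) (g' := fun x => exp x + 1 + x * exp x)
    hx (by simp) (fun x => ((hasDerivAt_exp x).sub_const 1).const_mul 2 |>.congr_deriv (by ring))
    (fun x => ((hasDerivAt_id x).mul ((hasDerivAt_exp x).add_const 1)).congr_deriv (by simp))
    fun y _ => ?_
  have := mul_le_mul_of_nonneg_left (add_one_le_exp (-y)) (exp_pos y).le
  rw [← exp_add, add_neg_cancel, exp_zero] at this
  nlinarith

theorem integral_exp_neg_mul {M τ : ℝ} (hM : M ≠ 0) :
    ∫ s in (0)..τ, exp (-(M * s)) = (1 - exp (-(M * τ))) / M := by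
  simp_rw [← neg_mul]
  rw [intervalIntegral.integral_comp_mul_left (fun x => exp x) (neg_ne_zero.2 hM), integral_exp]
  simp [field]

theorem div_one_add_mul_le_integral_exp_neg_mul {M t T : ℝ} (hM : 0 < M) (htT : t ≤ T) :
    (T - t) / (1 + M * (T - t)) ≤ ∫ s in t..T, exp (-(M * (s - t))) := by
  rw [intervalIntegral.integral_comp_sub_right (fun τ => exp (-(M * τ))), sub_self,
    integral_exp_neg_mul hM.ne', div_le_div_iff₀ (by nlinarith) hM]
  have := mul_le_mul_of_nonneg_left (add_one_le_exp (M * (T - t))) (exp_pos (-(M * (T - t)))).le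
  rw [← exp_add, neg_add_cancel, exp_zero] at this
  nlinarith

namespace Heston

noncomputable def denom (κ d τ : ℝ) : ℝ := (κ + d) * exp (d * τ) - κ + d

noncomputable def riccatiB (κ d τ : ℝ) : ℝ := (exp (d * τ) - 1) / denom κ d τ

noncomputable def riccatiA (κ d τ : ℝ) : ℝ := log (denom κ d τ) - log (2 * d) - (κ + d) * τ / 2

-- With `τ = s - t`, the paper's `B(t, s)` and `A(t, s)` are `B b κ d τ` and `A b ν c₀ κ d τ`.
noncomputable def B (b κ d τ : ℝ) : ℝ := 2 * b * riccatiB κ d τ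

noncomputable def A (b ν c₀ κ d τ : ℝ) : ℝ := 4 * b * ν / (κ ^ 2 - d ^ 2) * riccatiA κ d τ + c₀ * τ

variable {b ν c₀ κ d : ℝ}

theorem denom_pos (hκ : -d < κ) (hκd : κ < d) (τ : ℝ) : 0 < denom κ d τ := by
  unfold denom
  nlinarith [exp_pos (d * τ)]

theorem continuous_riccatiB (hκ : -d < κ) (hκd : κ < d) : Continuous (riccatiB κ d) :=
  Continuous.div (by fun_prop) (by unfold denom; fun_prop) fun τ => (denom_pos hκ hκd τ).ne'

theorem continuous_riccatiA (hκ : -d < κ) (hκd : κ < d) : Continuous (riccatiA κ d) :=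
  ((Continuous.log (by unfold denom; fun_prop) fun τ => (denom_pos hκ hκd τ).ne').sub
    continuous_const).sub (by fun_prop)

theorem continuous_A (hκ : -d < κ) (hκd : κ < d) : Continuous (A b ν c₀ κ d) := by
  have := continuous_riccatiA hκ hκd
  unfold A
  fun_prop

theorem continuous_B (hκ : -d < κ) (hκd : κ < d) : Continuous (B b κ d) := by
  have := continuous_riccatiB hκ hκd
  unfold B
  fun_prop

theorem riccatiB_le (hκ : 0 ≤ κ) (hκd : κ < d) {τ : ℝ} (hτ : 0 ≤ τ) :
    riccatiB κ d τ ≤ τ / 2 := by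
  have hd : 0 ≤ d * τ := mul_nonneg (hκ.trans hκd.le) hτ
  rw [riccatiB, div_le_div_iff₀ (denom_pos (by linarith) hκd τ) two_pos, denom]
  -- `denom = κ (e^{dτ} - 1) + d (e^{dτ} + 1)`, and the first summand is nonnegative
  nlinarith [two_mul_exp_sub_one_le hd,
    mul_nonneg (mul_nonneg hκ hτ) (sub_nonneg.2 (one_le_exp hd))]

theorem hasDerivAt_riccatiA (hκ : -d < κ) (hκd : κ < d) (τ : ℝ) :
    HasDerivAt (riccatiA κ d) ((d ^ 2 - κ ^ 2) / 2 * riccatiB κ d τ) τ := by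
  have hden : HasDerivAt (denom κ d) ((κ + d) * (exp (d * τ) * d)) τ :=
    ((((hasDerivAt_id τ).const_mul d).exp.const_mul (κ + d)).sub_const κ).add_const d
      |>.congr_deriv (by simp)
  refine ((hden.log (denom_pos hκ hκd τ).ne').sub_const _).sub
    (((hasDerivAt_id τ).const_mul (κ + d)).div_const 2) |>.congr_deriv ?_
  have := (denom_pos hκ hκd τ).ne'
  rw [riccatiB]
  field_simp
  simp only [denom]
  ring

theorem riccatiA_le (hκ : 0 ≤ κ) (hκd : κ < d) {τ : ℝ} (hτ : 0 ≤ τ) :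
    riccatiA κ d τ ≤ (d ^ 2 - κ ^ 2) * τ ^ 2 / 8 := by
  refine le_of_hasDerivAt_le hτ (by simp [riccatiA, denom, ← two_mul])
    (hasDerivAt_riccatiA (by linarith) hκd)
    (fun x => ((hasDerivAt_pow 2 x).const_mul _).div_const 8) fun x hx => ?_
  have hκd2 : 0 ≤ d ^ 2 - κ ^ 2 := by nlinarith
  have := mul_le_mul_of_nonneg_left (riccatiB_le hκ hκd hx.1) hκd2
  push_cast
  linarith

theorem log_sub_eq_riccatiA (hκ : -d < κ) (hκd : κ < d) (t s : ℝ) :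
    log ((κ + d) * exp (d * s) - (κ - d) * exp (d * t)) - log (2 * d)
      - 1 / 2 * ((κ + d) * s - (κ - d) * t) = riccatiA κ d (s - t) := by
  have h : (κ + d) * exp (d * s) - (κ - d) * exp (d * t) = exp (d * t) * denom κ d (s - t) := by
    rw [denom, mul_sub, exp_sub]
    field_simp
    ring
  rw [h, log_mul (exp_pos _).ne' (denom_pos hκ hκd _).ne', log_exp, riccatiA]
  ring

theorem B_le (hb : 0 ≤ b) (hκ : 0 ≤ κ) (hκd : κ < d) {τ : ℝ} (hτ : 0 ≤ τ) :
    B b κ d τ ≤ b * τ := by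
  have := mul_le_mul_of_nonneg_left (riccatiB_le hκ hκd hτ) hb
  rw [B]
  linarith

theorem neg_le_A (hb : 0 ≤ b) (hν : 0 ≤ ν) (hc₀ : 0 ≤ c₀) (hκ : 0 ≤ κ) (hκd : κ < d)
    {τ : ℝ} (hτ : 0 ≤ τ) :
    -(1 / 2 * ν * b * τ ^ 2) ≤ A b ν c₀ κ d τ := by
  have hκd2 : κ ^ 2 - d ^ 2 < 0 := by nlinarith
  have hcoef : 4 * b * ν / (κ ^ 2 - d ^ 2) ≤ 0 :=
    div_nonpos_of_nonneg_of_nonpos (by positivity) hκd2.le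
  calc -(1 / 2 * ν * b * τ ^ 2)
      = 4 * b * ν / (κ ^ 2 - d ^ 2) * ((d ^ 2 - κ ^ 2) * τ ^ 2 / 8) := by
        field_simp [hκd2.ne]
        ring
    _ ≤ 4 * b * ν / (κ ^ 2 - d ^ 2) * riccatiA κ d τ :=
        mul_le_mul_of_nonpos_left (riccatiA_le hκ hκd hτ) hcoef
    _ ≤ A b ν c₀ κ d τ := le_add_of_nonneg_right (mul_nonneg hc₀ hτ)

theorem neg_mul_le_A_sub_B_mul (hb : 0 ≤ b) (hν : 0 ≤ ν) (hc₀ : 0 ≤ c₀) (hκ : 0 ≤ κ)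
    (hκd : κ < d) {y τ τ₀ : ℝ} (hy : 0 ≤ y) (hτ : 0 ≤ τ) (hτ₀ : τ ≤ τ₀) :
    -((b * y + 1 / 2 * ν * b * τ₀) * τ) ≤ A b ν c₀ κ d τ - B b κ d τ * y := by
  have hA := neg_le_A hb hν hc₀ hκ hκd hτ
  have hB := mul_le_mul_of_nonneg_right (B_le hb hκ hκd hτ) hy
  have hτ₀' := mul_le_mul_of_nonneg_left hτ₀ (mul_nonneg (mul_nonneg hν hb) hτ)
  nlinarith

end Heston

theorem heston_consumption_wealth_ratio_bound_general
    (b κ β ν c₀ T δ ψ : ℝ)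
    (hb : 0 < b) (hκ : 0 < κ) (hβ : 0 < β) (hν : 0 < ν) (hδ : 0 < δ)
    (hc₀ : 0 ≤ c₀)
    (d : ℝ) (hd : d = Real.sqrt (κ ^ 2 + 2 * b * β ^ 2))
    (B A : ℝ → ℝ → ℝ)
    (hB : ∀ t s : ℝ, t ≤ s → B t s = 2 * b * (Real.exp (d * (s - t)) - 1)
      / ((κ + d) * Real.exp (d * (s - t)) - κ + d))
    (hA : ∀ t s : ℝ, t ≤ s →
      A t s = (4 * b * ν / (κ ^ 2 - d ^ 2)) *
        (Real.log ((κ + d) * Real.exp (d * s) - (κ - d) * Real.exp (d * t))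
          - Real.log (2 * d) - (1 / 2) * ((κ + d) * s - (κ - d) * t))
      + c₀ * (s - t))
    (g : ℝ → ℝ → ℝ)
    (hg : ∀ t y : ℝ, g t y = δ ^ ψ * ∫ s in t..T, Real.exp (A t s - B t s * y)) :
    ∀ t ∈ Set.Ico (0 : ℝ) T, ∀ y ∈ Set.Ici (0 : ℝ),
      δ ^ ψ / g t y ≤ 1 / (T - t) + b * y + (1 / 2) * ν * b * (T - t) := by
  rintro t ⟨-, htT⟩ y (hy : 0 ≤ y)
  have hκd : κ < d := hd ▸ (lt_sqrt hκ.le).2 (by nlinarith [mul_pos hb (pow_pos hβ 2)])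
  set F : ℝ → ℝ := fun τ => Heston.A b ν c₀ κ d τ - Heston.B b κ d τ * y
  have hAB : ∀ s ∈ Icc t T, A t s - B t s * y = F (s - t) := fun s ⟨hts, _⟩ => by
    rw [hA t s hts, hB t s hts, Heston.log_sub_eq_riccatiA (by linarith) hκd]
    simp only [F, Heston.A, Heston.B, Heston.riccatiB, Heston.denom]
    ring
  have hF : Continuous F :=
    (Heston.continuous_A (by linarith) hκd).sub
      ((Heston.continuous_B (by linarith) hκd).mul continuous_const)
  have hint : IntervalIntegrable (fun s => exp (A t s - B t s * y)) volume t T := by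
    refine ((hF.comp (continuous_sub_right t)).rexp.continuousOn.congr fun s hs => ?_)
      |>.intervalIntegrable
    rw [uIcc_of_le htT.le] at hs
    simp only [Function.comp_apply, hAB s hs]
  set M := b * y + 1 / 2 * ν * b * (T - t)
  have hM : 0 < M := by have := sub_pos.2 htT; positivity
  have hI : (T - t) / (1 + M * (T - t)) ≤ ∫ s in t..T, exp (A t s - B t s * y) :=
    (div_one_add_mul_le_integral_exp_neg_mul hM htT.le).trans <|
      intervalIntegral.integral_mono_on htT.le ((by fun_prop : Continuous _).intervalIntegrable _ _)
        hint fun s hs => by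
          rw [hAB s hs]
          exact exp_le_exp.2 <| Heston.neg_mul_le_A_sub_B_mul hb.le hν.le hc₀ hκ.le hκd hy
            (sub_nonneg.2 hs.1) (sub_le_sub_right hs.2 t)
  rw [hg, div_mul_cancel_left₀ (rpow_pos_of_pos hδ ψ).ne']
  calc (∫ s in t..T, exp (A t s - B t s * y))⁻¹ ≤ ((T - t) / (1 + M * (T - t)))⁻¹ :=
        inv_anti₀ (by have := sub_pos.2 htT; positivity) hI
    _ = 1 / (T - t) + M := by field_simp [(sub_pos.2 htT).ne']
    _ = _ := by ring

/-- Bound on the candidate optimal consumption–wealth ratio in the robust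
consumption–portfolio problem for the Heston model (case `c₀ ≥ 0`):
`δ^ψ/g(t,y) ≤ 1/(T−t) + by + ½νb(T−t)` on `[0,T) × [0,∞)`. -/
theorem heston_consumption_wealth_ratio_bound
    (b κ β ν c₀ T δ ψ : ℝ)
    (hb : 0 < b) (hκ : 0 < κ) (hβ : 0 < β) (hν : 0 < ν) (hT : 0 < T) (hδ : 0 < δ)
    (hc₀ : 0 ≤ c₀)
    (d : ℝ) (hd : d = Real.sqrt (κ ^ 2 + 2 * b * β ^ 2))
    (B A : ℝ → ℝ → ℝ)
    (hB : ∀ t s : ℝ, t ≤ s → B t s = 2 * b * (Real.exp (d * (s - t)) - 1)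
      / ((κ + d) * Real.exp (d * (s - t)) - κ + d))
    (hA : ∀ t s : ℝ, t ≤ s →
      A t s = (4 * b * ν / (κ ^ 2 - d ^ 2)) *
        (Real.log ((κ + d) * Real.exp (d * s) - (κ - d) * Real.exp (d * t))
          - Real.log (2 * d) - (1 / 2) * ((κ + d) * s - (κ - d) * t))
      + c₀ * (s - t))
    (g : ℝ → ℝ → ℝ)
    (hg : ∀ t y : ℝ, g t y = δ ^ ψ * ∫ s in t..T, Real.exp (A t s - B t s * y)) :
    ∀ t ∈ Set.Ico (0 : ℝ) T, ∀ y ∈ Set.Ici (0 : ℝ),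
      δ ^ ψ / g t y ≤ 1 / (T - t) + b * y + (1 / 2) * ν * b * (T - t) :=
  heston_consumption_wealth_ratio_bound_general b κ β ν c₀ T δ ψ hb hκ hβ hν hδ hc₀ d hd B A hB hA g
    hg
end

section
/- Let γ > 1, ψ > 1 and δ > 0 be real numbers, set φ := 1/ψ and θ := (1−γ)/(1−φ), and for c > 0 and v < 0 define the Epstein–Zin aggregator f(c,v) := δθ v [ (c / ((1−γ)v)^{1/(1−γ)})^{1−φ} − 1 ] (well defined since (1−γ)v > 0). Then for every c > 0 and all v₁, v₂ with v₂ ≤ v₁ < 0: f(c, v₁) − f(c, v₂) ≤ δ|θ| (v₁ − v₂). -/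
/-!
With `a = 1 - γ < 0` and `p = 1 - φ > 0`, so that `θ = a / p < 0`, the aggregator splits as
`f(c, v) = (δ / p) c^p (a v)^(1 - p/a) - δ θ v`. The exponent `1 - p/a` is positive and `a v`
decreases in `v`, so the first term is nonincreasing in `v`; hence the increment of `f` is at most
that of the linear term `-δ θ v = δ |θ| v`.
-/

open Real

theorem mul_div_rpow_one_div_rpow {x c : ℝ} (hx : 0 < x) (hc : 0 ≤ c) (a p : ℝ) :
    x * (c / x ^ (1 / a)) ^ p = c ^ p * x ^ (1 - p / a) := by
  rw [div_rpow hc (rpow_nonneg hx.le _), ← rpow_mul hx.le, rpow_sub hx, rpow_one,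
    one_div_mul_eq_div]
  field_simp

theorem epsteinZin_aggregator_eq {a p δ c v : ℝ} (hav : 0 < a * v) (hp : p ≠ 0) (hc : 0 ≤ c) :
    δ * (a / p) * v * ((c / (a * v) ^ (1 / a)) ^ p - 1)
      = δ / p * (c ^ p * (a * v) ^ (1 - p / a)) - δ * (a / p) * v := by
  rw [← mul_div_rpow_one_div_rpow hav hc]
  field_simp

/-- Monotonicity condition (A3) for the continuous-time Epstein–Zin aggregator in the
case `γ > 1`, `ψ > 1`: for `c > 0` and `v₂ ≤ v₁ < 0`,
`f(c, v₁) − f(c, v₂) ≤ δ|θ|(v₁ − v₂)`. -/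
theorem epstein_zin_monotonicity
    (γ ψ δ : ℝ) (hγ : 1 < γ) (hψ : 1 < ψ) (hδ : 0 < δ)
    (φ θ : ℝ) (hφ : φ = 1 / ψ) (hθ : θ = (1 - γ) / (1 - φ))
    (f : ℝ → ℝ → ℝ)
    (hf : ∀ c v : ℝ, 0 < c → v < 0 →
      f c v = δ * θ * v * ((c / ((1 - γ) * v) ^ (1 / (1 - γ))) ^ (1 - φ) - 1)) :
    ∀ c : ℝ, 0 < c → ∀ v₁ v₂ : ℝ, v₂ ≤ v₁ → v₁ < 0 →
      f c v₁ - f c v₂ ≤ δ * |θ| * (v₁ - v₂) := by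
  intro c hc v₁ v₂ h12 h1
  set a := 1 - γ
  set p := 1 - φ
  have ha : a < 0 := by linarith
  have hp : 0 < p := by
    have : φ < 1 := hφ ▸ (div_lt_one (by linarith)).2 hψ
    linarith
  have hv₂ : v₂ < 0 := h12.trans_lt h1
  have hθ_neg : θ < 0 := hθ ▸ div_neg_of_neg_of_pos ha hp
  have hq : 0 ≤ 1 - p / a := by linarith [div_neg_of_pos_of_neg hp ha]
  have hmono : (a * v₁) ^ (1 - p / a) ≤ (a * v₂) ^ (1 - p / a) :=
    rpow_le_rpow (mul_pos_of_neg_of_neg ha h1).le (mul_le_mul_of_nonpos_left h12 ha.le) hq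
  have hcoef : 0 ≤ δ / p * c ^ p := by positivity
  rw [hf c v₁ hc h1, hf c v₂ hc hv₂, abs_of_neg hθ_neg, hθ,
    epsteinZin_aggregator_eq (mul_pos_of_neg_of_neg ha h1) hp.ne' hc.le,
    epsteinZin_aggregator_eq (mul_pos_of_neg_of_neg ha hv₂) hp.ne' hc.le]
  linarith [mul_le_mul_of_nonneg_left hmono hcoef]
end
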